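/- arXiv:1503.03049 — 6 statements merged into one kernel-verified Lean document; each statement's English description precedes it below -/
import Mathlib

section
/- Let m be a positive integer, let X be any subset of the projective space P^m(F_q), and let a := max{ |X ∩ H| : H a hyperplane of P^m(F_q) }. Then |X| ≤ a·q + 1. -/
/-- The set of points of the projective space `P^{n-1}(F)` at which a (homogeneous)
polynomial `f` in `n` variables vanishes. -/
def projZeros {F : Type*} [Field F] {n : ℕ} (f : MvPolynomial (Fin n) F) :
    Set (Projectivization F (Fin n → F)) :=
  {P | MvPolynomial.eval P.rep f = 0}

/-- A hyperplane in `P^{n-1}(F)` is the vanishing set of a nonzero homogeneous linear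
polynomial. -/
def IsHyperplane {F : Type*} [Field F] {n : ℕ}
    (H : Set (Projectivization F (Fin n → F))) : Prop :=
  ∃ L : MvPolynomial (Fin n) F, L ≠ 0 ∧ L.IsHomogeneous 1 ∧ H = projZeros L

/-!
Count incidences between the points of `X` and the nonzero coefficient vectors `c`, each
describing the hyperplane `c ⬝ᵥ x = 0` (every hyperplane is counted `q - 1` times). Each point
is incident to `q^m - 1` vectors and each vector to at most `a` points of `X`, so
`|X| (q^m - 1) ≤ (q^(m+1) - 1) a`. As `a` is at most the number `(q^m - 1) / (q - 1)` of points
of a hyperplane, the right-hand side is at most `(a q + 1) (q^m - 1)`.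
-/

open Finset MvPolynomial
open scoped LinearAlgebra.Projectivization

theorem MvPolynomial.isHomogeneous_one_iff {R σ : Type*} [CommSemiring R] [Fintype σ]
    {L : MvPolynomial σ R} : L.IsHomogeneous 1 ↔ ∃ c : σ → R, ∑ i, c i • X i = L := by
  rw [← mem_homogeneousSubmodule, homogeneousSubmodule_one_eq_span_X,
    Submodule.mem_span_range_iff_exists_fun]

theorem MvPolynomial.eval_sum_smul_X {R σ : Type*} [CommSemiring R] [Fintype σ] (c v : σ → R) :
    eval v (∑ i, c i • X i) = c ⬝ᵥ v := by
  simp [dotProduct]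

theorem isHyperplane_iff {F : Type*} [Field F] {n : ℕ} {H : Set (ℙ F (Fin n → F))} :
    IsHyperplane H ↔ ∃ c : Fin n → F, c ≠ 0 ∧ H = {P | c ⬝ᵥ P.rep = 0} := by
  have hzeros (c : Fin n → F) : projZeros (∑ i, c i • X i) = {P | c ⬝ᵥ P.rep = 0} := by
    simp only [projZeros, eval_sum_smul_X]
  constructor
  · rintro ⟨L, hL0, hL1, rfl⟩
    obtain ⟨c, rfl⟩ := isHomogeneous_one_iff.1 hL1
    refine ⟨c, ?_, hzeros c⟩
    rintro rfl
    simp at hL0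
  · rintro ⟨c, hc, rfl⟩
    refine ⟨∑ i, c i • X i, ?_, isHomogeneous_one_iff.2 ⟨c, rfl⟩, (hzeros c).symm⟩
    intro h
    refine hc (dotProduct_eq_zero_iff.1 fun v => ?_)
    rw [← eval_sum_smul_X, h, map_zero]

theorem LinearMap.card_ker_mul_card_eq_of_ne_zero {K V : Type*} [Field K] [AddCommGroup V]
    [Module K V] {f : V →ₗ[K] K} (hf : f ≠ 0) :
    Nat.card (ker f) * Nat.card K = Nat.card V := by
  rw [Submodule.card_eq_card_quotient_mul_card (ker f),
    Nat.card_congr (f.quotKerEquivOfSurjective (surjective_of_ne_zero hf)).toEquiv]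

namespace Projectivization

variable {K V : Type*} [Field K] [AddCommGroup V] [Module K V]

theorem range_map_subtype (W : Submodule K V) :
    Set.range (map W.subtype W.injective_subtype) = {P : ℙ K V | P.rep ∈ W} := by
  ext P
  constructor
  · rintro ⟨Q, rfl⟩
    induction Q using ind with | h w hw =>
    obtain ⟨a, ha⟩ := exists_smul_eq_mk_rep K (W.subtype w) (by simpa using hw)
    rw [map_mk, Set.mem_ofPred_eq, ← ha]
    exact W.smul_of_tower_mem a w.2
  · intro hP
    refine ⟨mk K ⟨P.rep, hP⟩ (by simpa using P.rep_nonzero), ?_⟩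
    rw [map_mk]
    exact mk_rep P

theorem card_sub_one_eq_ncard_setOf_rep_mem_mul (W : Submodule K V) :
    Nat.card W - 1 = {P : ℙ K V | P.rep ∈ W}.ncard * (Nat.card K - 1) := by
  rw [card K W, ← range_map_subtype, Set.ncard_range_of_injective (map_injective _ _)]

end Projectivization

section DotProduct

variable {K ι : Type*} [Field K] [Fintype K] [Fintype ι] [DecidableEq ι]

theorem card_ker_dotProductEquiv {w : ι → K} (hw : w ≠ 0) :
    Nat.card (LinearMap.ker (dotProductEquiv K ι w)) = Fintype.card K ^ (Fintype.card ι - 1) := by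
  have h := LinearMap.card_ker_mul_card_eq_of_ne_zero
    ((LinearEquiv.map_ne_zero_iff (dotProductEquiv K ι)).2 hw)
  have hι : Fintype.card ι ≠ 0 := by
    obtain ⟨i, -⟩ := Function.ne_iff.1 hw
    exact (Fintype.card_pos_iff.2 ⟨i⟩).ne'
  rw [Nat.card_fun, Nat.card_eq_fintype_card (α := K), Nat.card_eq_fintype_card (α := ι),
    ← Nat.sub_one_add_one hι, pow_succ] at h
  exact Nat.eq_of_mul_eq_mul_right Fintype.card_pos h

theorem ncard_setOf_dotProduct_eq_zero_mul {c : ι → K} (hc : c ≠ 0) :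
    {P : ℙ K (ι → K) | c ⬝ᵥ P.rep = 0}.ncard * (Fintype.card K - 1)
      = Fintype.card K ^ (Fintype.card ι - 1) - 1 := by
  rw [← card_ker_dotProductEquiv hc, Projectivization.card_sub_one_eq_ncard_setOf_rep_mem_mul,
    Nat.card_eq_fintype_card]
  rfl

theorem card_filter_ne_zero_dotProduct_eq_zero [DecidableEq K] {w : ι → K} (hw : w ≠ 0) :
    #{c | c ≠ 0 ∧ c ⬝ᵥ w = 0} = Fintype.card K ^ (Fintype.card ι - 1) - 1 := by
  have hker : #{c | w ⬝ᵥ c = 0} = Nat.card (LinearMap.ker (dotProductEquiv K ι w)) := by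
    rw [← Fintype.card_subtype, ← Nat.card_eq_fintype_card]
    rfl
  have herase : ({c | c ≠ 0 ∧ c ⬝ᵥ w = 0} : Finset (ι → K))
      = ({c | w ⬝ᵥ c = 0} : Finset _).erase 0 := by
    ext c
    simp [dotProduct_comm c w]
  rw [herase, card_erase_of_mem (by simp), hker, card_ker_dotProductEquiv hw]

theorem ncard_mul_le_of_forall_ncard_inter_le (X : Set (ℙ K (ι → K))) {a : ℕ}
    (hX : ∀ c : ι → K, c ≠ 0 → (X ∩ {P | c ⬝ᵥ P.rep = 0}).ncard ≤ a) :
    X.ncard * (Fintype.card K ^ (Fintype.card ι - 1) - 1)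
      ≤ (Fintype.card K ^ Fintype.card ι - 1) * a := by
  classical
  have := Fintype.ofFinite (ℙ K (ι → K))
  have hcount := card_mul_le_card_mul (s := X.toFinset) (t := {c : ι → K | c ≠ 0})
    (fun P c => c ⬝ᵥ P.rep = 0) (m := Fintype.card K ^ (Fintype.card ι - 1) - 1) (n := a)
    (fun P _ => by
      rw [bipartiteAbove, filter_filter, card_filter_ne_zero_dotProduct_eq_zero P.rep_nonzero])
    (fun c hc => by
      rw [← Set.ncard_coe_finset, bipartiteBelow, coe_filter]
      simp only [Set.mem_toFinset]
      exact hX c (by simpa using hc))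
  rwa [← Set.ncard_eq_toFinset_card', filter_ne', card_erase_of_mem (mem_univ _), card_univ,
    Fintype.card_fun] at hcount

end DotProduct

theorem Nat.le_mul_add_one_of_mul_sub_one_le {x a q N : ℕ} (hN : 1 < N)
    (hx : x * (N - 1) ≤ (N * q - 1) * a) (ha : a * (q - 1) ≤ N - 1) : x ≤ a * q + 1 := by
  rcases Nat.eq_zero_or_pos q with rfl | hq
  · simp at hx
    omega
  have hsplit : N * q - 1 = q * (N - 1) + (q - 1) := by
    have hNq : 1 ≤ N * q := Nat.mul_pos (by omega) hq
    zify [hN.le, hq, hNq]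
    ring
  refine Nat.le_of_mul_le_mul_right ?_ (Nat.sub_pos_of_lt hN)
  calc x * (N - 1) ≤ (N * q - 1) * a := hx
    _ = a * q * (N - 1) + a * (q - 1) := by rw [hsplit]; ring
    _ ≤ (a * q + 1) * (N - 1) := by nlinarith

/-- Zanella's lemma: if `X ⊆ P^m(F_q)` and `a` is the maximum of `|X ∩ H|` over all
hyperplanes `H` of `P^m(F_q)`, then `|X| ≤ a⬝q + 1`. -/
theorem stmt_1 {F : Type*} [Field F] [Fintype F] (q : ℕ) (hq : q = Fintype.card F)
    (m : ℕ) (hm : 0 < m) (X : Set (Projectivization F (Fin (m + 1) → F))) (a : ℕ)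
    (ha : IsGreatest {n : ℕ | ∃ H, IsHyperplane H ∧ n = (X ∩ H).ncard} a) :
    X.ncard ≤ a * q + 1 := by
  have hq1 : 1 < q := hq ▸ Fintype.one_lt_card
  have hX : ∀ c : Fin (m + 1) → F, c ≠ 0 → (X ∩ {P | c ⬝ᵥ P.rep = 0}).ncard ≤ a :=
    fun c hc => ha.2 ⟨_, isHyperplane_iff.2 ⟨c, hc, rfl⟩, rfl⟩
  have ha_le : a * (q - 1) ≤ q ^ m - 1 := by
    obtain ⟨H, hH, rfl⟩ := ha.1
    obtain ⟨c, hc, rfl⟩ := isHyperplane_iff.1 hH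
    calc (X ∩ _).ncard * (q - 1) ≤ {P : ℙ F _ | c ⬝ᵥ P.rep = 0}.ncard * (q - 1) :=
          Nat.mul_le_mul_right _ (Set.ncard_inter_le_ncard_right _ _)
      _ = q ^ m - 1 := by simpa [hq] using ncard_setOf_dotProduct_eq_zero_mul hc
  have hcount : X.ncard * (q ^ m - 1) ≤ (q ^ m * q - 1) * a := by
    simpa [hq, pow_succ] using ncard_mul_le_of_forall_ncard_inter_le X hX
  exact Nat.le_mul_add_one_of_mul_sub_one_le (Nat.one_lt_pow hm.ne' hq1) hcount ha_le
end

section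
/- Let m and d be positive integers with d ≤ q, and let a_1, ..., a_d be distinct elements of F_q. Then the homogeneous polynomial G_d(x_0, x_1, ..., x_m) = (x_1 - a_1 x_0)(x_1 - a_2 x_0)···(x_1 - a_d x_0) of degree d has exactly d·q^{m-1} + p_{m-2} zeros in the projective space P^m(F_q). -/
/-- `pj q j` is `p_j = q^j + q^(j-1) + ... + q + 1` for `j ≥ 0` and `p_j = 0` for `j < 0`. -/
def pj (q : ℕ) (j : ℤ) : ℕ := if 0 ≤ j then ∑ i ∈ Finset.range (j.toNat + 1), q ^ i else 0

lemma geom_aux (q : ℕ) (hq : 1 ≤ q) : ∀ k, (q - 1) * ∑ i ∈ Finset.range (k+1), q ^ i = q ^ (k+1) - 1 := by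
  intro k
  induction k with
  | zero => simp
  | succ k ih =>
    rw [Finset.sum_range_succ, Nat.mul_add, ih]
    have h1 : 1 ≤ q ^ (k+1) := Nat.one_le_pow _ _ hq
    have h2 : q ^ (k+1+1) = q * q ^ (k+1) := by ring
    have h3 : (q-1) * q^(k+1) = q * q^(k+1) - q^(k+1) := by rw [Nat.sub_mul, one_mul]
    have h4 : q ^ (k+1) ≤ q * q ^ (k+1) := Nat.le_mul_of_pos_left _ (by omega)
    omega

lemma pj_mul (q : ℕ) (hq : 1 ≤ q) (n : ℕ) : (q - 1) * pj q ((n:ℤ) - 1) = q ^ n - 1 := by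
  cases n with
  | zero => simp [pj]
  | succ k =>
    have h0 : (0:ℤ) ≤ ((k+1:ℕ):ℤ) - 1 := by push_cast; omega
    have h1 : (((k+1:ℕ):ℤ) - 1).toNat = k := by omega
    rw [pj, if_pos h0, h1]
    exact geom_aux q hq k

/-- embedding of two scalars and a vector into `Fin (n+2) → F` -/
def emb2 {F : Type*} (n : ℕ) (u y : F) (w : Fin n → F) : Fin (n+2) → F
  | ⟨0, _⟩ => u
  | ⟨1, _⟩ => y
  | ⟨j+2, h⟩ => w ⟨j, by omega⟩

lemma emb2_eq_self {F : Type*} {n : ℕ} (v : Fin (n+2) → F) :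
    emb2 n (v ⟨0, by omega⟩) (v ⟨1, by omega⟩) (fun j => v ⟨j.1+2, by omega⟩) = v := by
  funext k
  obtain ⟨(_|_|j), hk⟩ := k <;> rfl

set_option maxHeartbeats 1600000 in
/-- For `m, d` positive, `d ≤ q`, and `a_1, ..., a_d` distinct elements of `F_q`, the
homogeneous polynomial `G_d = (x_1 - a_1 x_0) ⋯ (x_1 - a_2 x_0)` of degree `d` has exactly
`d⬝q^(m-1) + p_{m-2}` zeros in `P^m(F_q)`. -/
theorem stmt_5 {F : Type*} [Field F] [Fintype F] (q : ℕ) (hq : q = Fintype.card F)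
    (m d : ℕ) (hm : 0 < m) (hd : 0 < d) (hdq : d ≤ q)
    (a : Fin d → F) (ha : Function.Injective a) :
    (projZeros (∏ i : Fin d,
        (MvPolynomial.X (⟨1, by omega⟩ : Fin (m + 1)) -
          MvPolynomial.C (a i) * MvPolynomial.X (⟨0, by omega⟩ : Fin (m + 1))))).ncard
      = d * q ^ (m - 1) + pj q ((m : ℤ) - 2) := by
  obtain ⟨n, rfl⟩ : ∃ n, m = n + 1 := ⟨m - 1, by omega⟩
  have hq2 : 2 ≤ q := by rw [hq]; exact Fintype.one_lt_card
  set i0 : Fin (n + 1 + 1) := ⟨0, by omega⟩ with hi0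
  set i1 : Fin (n + 1 + 1) := ⟨1, by omega⟩ with hi1
  set G : MvPolynomial (Fin (n+1+1)) F :=
    ∏ i : Fin d, (MvPolynomial.X i1 - MvPolynomial.C (a i) * MvPolynomial.X i0) with hG
  set Qp : (Fin (n+1+1) → F) → Prop := fun v => ∃ i, v i1 = a i * v i0 with hQp
  have heval : ∀ v : Fin (n+1+1) → F, MvPolynomial.eval v G = ∏ i : Fin d, (v i1 - a i * v i0) := by
    intro v; rw [hG, map_prod]; simp
  have hzero : ∀ v : Fin (n+1+1) → F, MvPolynomial.eval v G = 0 ↔ Qp v := by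
    intro v
    rw [heval, Finset.prod_eq_zero_iff]
    simp [hQp, sub_eq_zero]
  have hscale : ∀ (c : F), c ≠ 0 → ∀ v, Qp v → Qp (c • v) := by
    rintro c hc v ⟨i, hi⟩
    exact ⟨i, by simp [Pi.smul_apply, smul_eq_mul, hi]; ring⟩
  have hscale' : ∀ (c : Fˣ) (v w : Fin (n+1+1) → F), (c : F) • v = w → (Qp v ↔ Qp w) := by
    rintro c v w rfl
    constructor
    · exact hscale c c.ne_zero v
    · intro h
      have := hscale (((c⁻¹ : Fˣ) : F)) (c⁻¹ : Fˣ).ne_zero _ h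
      rwa [smul_smul, Units.inv_mul, one_smul] at this
  -- membership in terms of Qp
  have hmem : ∀ P : Projectivization F (Fin (n+1+1) → F), P ∈ projZeros G ↔ Qp P.rep := by
    intro P
    exact hzero P.rep
  -- the affine cone
  set C : Set (Fin (n+1+1) → F) := {v | v ≠ 0 ∧ Qp v} with hC
  have hfinC : C.Finite := Set.toFinite _
  haveI : Finite (Projectivization F (Fin (n+1+1) → F)) := Quotient.finite _
  have hfinZ : (projZeros G).Finite := Set.toFinite _
  -- Step A
  have hA : Nat.card C = (projZeros G).ncard * (q - 1) := by
    have hf : Function.Bijective (fun Pc : ↥(projZeros G) × Fˣ =>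
        (⟨(Pc.2 : F) • Pc.1.1.rep,
          smul_ne_zero Pc.2.ne_zero (Projectivization.rep_nonzero _),
          hscale _ Pc.2.ne_zero _ ((hmem _).1 Pc.1.2)⟩ : ↥C)) := by
      constructor
      · rintro ⟨⟨P, hP⟩, c⟩ ⟨⟨P', hP'⟩, c'⟩ hEq
        have hEq' : (c : F) • P.rep = (c' : F) • P'.rep := congrArg Subtype.val hEq
        have hPP' : P = P' := by
          rw [← Projectivization.mk_rep P, ← Projectivization.mk_rep P',
            Projectivization.mk_eq_mk_iff]
          refine ⟨c⁻¹ * c', ?_⟩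
          rw [Units.smul_def, Units.val_mul, mul_smul, ← hEq', smul_smul, Units.val_inv_eq_inv_val,
            inv_mul_cancel₀ c.ne_zero, one_smul]
        subst hPP'
        have hcc : (c : F) = (c' : F) := by
          have h0 : ((c : F) - (c' : F)) • P.rep = 0 := by
            rw [sub_smul, hEq', sub_self]
          rcases smul_eq_zero.1 h0 with h | h
          · exact sub_eq_zero.1 h
          · exact absurd h (Projectivization.rep_nonzero P)
        simp [Prod.ext_iff, Units.ext_iff, hcc]
      · rintro ⟨v, hv0, hQv⟩
        obtain ⟨c, hc⟩ := Projectivization.exists_smul_eq_mk_rep F v hv0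
        have hPZ : Projectivization.mk F v hv0 ∈ projZeros G := by
          rw [hmem]
          exact (hscale' c v _ hc).1 hQv
        refine ⟨⟨⟨Projectivization.mk F v hv0, hPZ⟩, c⁻¹⟩, ?_⟩
        have hvv : ((c⁻¹ : Fˣ) : F) • ((c : Fˣ) • v) = v := by
          rw [Units.smul_def, smul_smul, Units.val_inv_eq_inv_val,
            inv_mul_cancel₀ c.ne_zero, one_smul]
        rw [hc] at hvv
        exact Subtype.ext hvv
    calc Nat.card C = Nat.card (↥(projZeros G) × Fˣ) := (Nat.card_eq_of_bijective _ hf).symm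
      _ = (projZeros G).ncard * (q - 1) := by
          rw [Nat.card_prod, Nat.card_coe_set_eq, Nat.card_units,
            Nat.card_eq_fintype_card, hq]
  -- Step B: split the cone
  haveI := Classical.decEq F
  set C1 : Set (Fin (n+1+1) → F) := {v | v i0 ≠ 0 ∧ Qp v} with hC1
  set C0 : Set (Fin (n+1+1) → F) := {v | v i0 = 0 ∧ v i1 = 0 ∧ v ≠ 0} with hC0
  have hCsplit : C = C1 ∪ C0 := by
    ext v
    simp only [hC, hC1, hC0, Set.mem_setOf_eq, Set.mem_union]
    constructor
    · rintro ⟨hv0, hQv⟩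
      by_cases h : v i0 = 0
      · right
        obtain ⟨i, hi⟩ := hQv
        exact ⟨h, by rw [hi, h, mul_zero], hv0⟩
      · exact Or.inl ⟨h, hQv⟩
    · rintro (⟨h1, h2⟩ | ⟨h1, h2, h3⟩)
      · exact ⟨fun h0 => h1 (by rw [h0]; rfl), h2⟩
      · exact ⟨h3, ⟨⟨0, hd⟩, by rw [h2, h1, mul_zero]⟩⟩
  have hdisj : Disjoint C1 C0 := by
    rw [Set.disjoint_left]
    rintro v ⟨h1, _⟩ ⟨h2, _⟩
    exact h1 h2
  -- count C1
  have hB1 : Nat.card C1 = (q - 1) * (d * q ^ n) := by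
    have hmemb : ∀ t : Fˣ × Fin d × (Fin n → F),
        emb2 n (t.1 : F) (a t.2.1 * (t.1 : F)) t.2.2 ∈ C1 :=
      fun t => ⟨t.1.ne_zero, ⟨t.2.1, rfl⟩⟩
    have hf : Function.Bijective (fun t : Fˣ × Fin d × (Fin n → F) =>
        (⟨emb2 n (t.1 : F) (a t.2.1 * (t.1 : F)) t.2.2, hmemb t⟩ : ↥C1)) := by
      constructor
      · rintro ⟨u, i, w⟩ ⟨u', i', w'⟩ hEq
        have h' := congrArg Subtype.val hEq
        have h0 : (u : F) = (u' : F) := congrFun h' i0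
        have h1 : a i * (u : F) = a i' * (u' : F) := congrFun h' i1
        have hu : u = u' := Units.ext h0
        have hii : i = i' := by
          apply ha
          rw [← h0] at h1
          exact mul_right_cancel₀ u.ne_zero h1
        have hw : w = w' := by
          funext j
          exact congrFun h' ⟨j.1 + 2, by omega⟩
        simp [hu, hii, hw]
      · rintro ⟨v, hv0, i, hi⟩
        refine ⟨⟨Units.mk0 (v i0) hv0, i, fun j => v ⟨j.1 + 2, by omega⟩⟩, Subtype.ext ?_⟩
        show emb2 n (v i0) (a i * v i0) (fun j => v ⟨j.1 + 2, by omega⟩) = v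
        rw [← hi]
        exact emb2_eq_self v
    rw [← Nat.card_eq_of_bijective _ hf, Nat.card_prod, Nat.card_prod, Nat.card_units,
      Nat.card_eq_fintype_card (α := F), Nat.card_eq_fintype_card (α := Fin d),
      Nat.card_eq_fintype_card (α := Fin n → F), Fintype.card_fin, Fintype.card_fun,
      Fintype.card_fin, hq]
  -- count C0
  have hB0 : Nat.card C0 = q ^ n - 1 := by
    have hmemb : ∀ w : {w : Fin n → F // w ≠ 0}, emb2 n (0:F) (0:F) w.1 ∈ C0 := by
      rintro ⟨w, hw⟩
      refine ⟨rfl, rfl, fun h => hw ?_⟩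
      funext j
      exact congrFun h ⟨j.1 + 2, by omega⟩
    have hf : Function.Bijective (fun w : {w : Fin n → F // w ≠ 0} =>
        (⟨emb2 n (0:F) (0:F) w.1, hmemb w⟩ : ↥C0)) := by
      constructor
      · rintro ⟨w, hw⟩ ⟨w', hw'⟩ hEq
        have h' := congrArg Subtype.val hEq
        refine Subtype.ext ?_
        funext j
        exact congrFun h' ⟨j.1 + 2, by omega⟩
      · rintro ⟨v, h0, h1, hv⟩
        refine ⟨⟨fun j => v ⟨j.1 + 2, by omega⟩, fun hw => hv ?_⟩, Subtype.ext ?_⟩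
        · funext k
          obtain ⟨(_|_|j), hk⟩ := k
          · exact h0
          · exact h1
          · exact congrFun hw ⟨j, by omega⟩
        · calc emb2 n (0:F) (0:F) (fun j => v ⟨j.1 + 2, by omega⟩)
              = emb2 n (v i0) (v i1) (fun j => v ⟨j.1 + 2, by omega⟩) := by rw [h0, h1]
            _ = v := emb2_eq_self v
    rw [← Nat.card_eq_of_bijective _ hf, Nat.card_eq_fintype_card,
      Fintype.card_subtype_compl, Fintype.card_subtype_eq, Fintype.card_fun,
      Fintype.card_fin, hq]
  -- combine
  have hB : Nat.card C = (q - 1) * (d * q ^ n) + (q ^ n - 1) := by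
    rw [Nat.card_coe_set_eq, hCsplit,
      Set.ncard_union_eq hdisj (Set.toFinite _) (Set.toFinite _),
      ← Nat.card_coe_set_eq, ← Nat.card_coe_set_eq, hB1, hB0]
  have hpj : (q - 1) * pj q ((n:ℤ) - 1) = q ^ n - 1 := pj_mul q (by omega) n
  have hfin : (projZeros G).ncard = d * q ^ n + pj q ((n:ℤ) - 1) := by
    apply Nat.eq_of_mul_eq_mul_right (show 0 < q - 1 by omega)
    calc (projZeros G).ncard * (q-1) = Nat.card C := hA.symm
      _ = (q-1)*(d*q^n) + (q^n - 1) := hB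
      _ = (q-1)*(d*q^n) + (q-1)*pj q ((n:ℤ)-1) := by rw [hpj]
      _ = (d*q^n + pj q ((n:ℤ)-1)) * (q-1) := by ring
  have hcast : ((n + 1 : ℕ) : ℤ) - 2 = (n : ℤ) - 1 := by push_cast; ring
  rw [hcast]
  exact hfin
end

section
/- Let m be a positive integer. Consider the quadrics Q_i := x_0·x_i for i = 1, ..., m and Q_{m+1} := x_0^2 in F_q[x_0, ..., x_m]. Then for each r with 1 ≤ r ≤ m+1, the polynomials Q_1, ..., Q_r are linearly independent homogeneous polynomials of degree 2, and |V(Q_1, ..., Q_r)| = p_{m-1} + q^{m-r} for 1 ≤ r ≤ m, while |V(Q_1, ..., Q_{m+1})| = p_{m-1}. -/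
open MvPolynomial Finset Projectivization
open scoped LinearAlgebra.Projectivization

lemma pj_natCast_sub_one (q n : ℕ) : pj q ((n : ℤ) - 1) = ∑ i ∈ range n, q ^ i := by
  rcases n with _ | n <;> simp [pj]

lemma pj_succ_natCast_sub_one (q k : ℕ) :
    pj q (((k + 1 : ℕ) : ℤ) - 1) = pj q ((k : ℤ) - 1) + q ^ k := by
  rw [pj_natCast_sub_one, pj_natCast_sub_one, sum_range_succ]

namespace Submodule

variable {K V : Type*} [Field K] [AddCommGroup V] [Module K V]

lemma mem_projectivization_iff_rep_mem (W : Submodule K V) (P : ℙ K V) :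
    P ∈ W.projectivization ↔ P.rep ∈ W := by
  rw [mem_projectivization_iff_submodule_le, submodule_eq, span_singleton_le_iff_mem]

lemma ncard_projectivization (W : Submodule K V) :
    (W.projectivization : Set (ℙ K V)).ncard = Nat.card (ℙ K W) := by
  rw [← Set.ncard_range_of_injective (map_injective W.subtype W.injective_subtype)]
  congr 1
  ext P
  constructor
  · intro hP
    rw [SetLike.mem_coe, mem_projectivization_iff_rep_mem] at hP
    refine ⟨Projectivization.mk K ⟨P.rep, hP⟩
      fun h => P.rep_nonzero (congrArg Subtype.val h), ?_⟩
    rw [map_mk]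
    exact P.mk_rep
  · rintro ⟨P', rfl⟩
    induction P' using Projectivization.ind with
    | h v _ => exact (mk_mem_projectivization_iff W _).mpr v.2

end Submodule

section

variable (K : Type*) [Field K] {ι : Type*}

def coordZeroSubspace (S : Finset ι) : Submodule K (ι → K) :=
  ⨅ i ∈ S, LinearMap.ker (LinearMap.proj i)

variable {K}

lemma mem_coordZeroSubspace {S : Finset ι} {v : ι → K} :
    v ∈ coordZeroSubspace K S ↔ ∀ i ∈ S, v i = 0 := by
  simp [coordZeroSubspace, Submodule.mem_iInf]

lemma finrank_coordZeroSubspace [Fintype ι] [DecidableEq ι] (S : Finset ι) :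
    Module.finrank K (coordZeroSubspace K S) = Fintype.card ι - #S := by
  have hS : coordZeroSubspace K S = ⨅ i ∈ (S : Set ι), LinearMap.ker (LinearMap.proj i) := by
    simp [coordZeroSubspace]
  rw [hS, (LinearMap.iInfKerProjEquiv K (fun _ : ι => K) (I := ↑Sᶜ) (J := ↑S)
    (by simp [Set.disjoint_left]) (by simp)).finrank_eq]
  simp

lemma ncard_projectivization_coordZeroSubspace [Fintype K] [Fintype ι] [DecidableEq ι]
    {S : Finset ι} {n : ℕ} (hn : #S + n = Fintype.card ι) :
    ((coordZeroSubspace K S).projectivization : Set (ℙ K (ι → K))).ncard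
      = pj (Fintype.card K) ((n : ℤ) - 1) := by
  rw [Submodule.ncard_projectivization,
    card_of_finrank K _ ((finrank_coordZeroSubspace S).trans (by omega : Fintype.card ι - #S = n)),
    Nat.card_eq_fintype_card, pj_natCast_sub_one]

lemma coe_projectivization_coordZeroSubspace_inter [DecidableEq ι] (S T : Finset ι) :
    ((coordZeroSubspace K S).projectivization : Set (ℙ K (ι → K))) ∩
        (coordZeroSubspace K T).projectivization
      = (coordZeroSubspace K (S ∪ T)).projectivization := by
  ext P
  simp [Submodule.mem_projectivization_iff_rep_mem, mem_coordZeroSubspace, or_imp, forall_and]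

lemma ncard_union_projectivization_coordZeroSubspace_add_ncard [Fintype K] [Fintype ι]
    [DecidableEq ι] {S T : Finset ι} {a b c : ℕ}
    (ha : #S + a = Fintype.card ι) (hb : #T + b = Fintype.card ι)
    (hc : #(S ∪ T) + c = Fintype.card ι) :
    (((coordZeroSubspace K S).projectivization : Set (ℙ K (ι → K))) ∪
        (coordZeroSubspace K T).projectivization).ncard + pj (Fintype.card K) ((c : ℤ) - 1)
      = pj (Fintype.card K) ((a : ℤ) - 1) + pj (Fintype.card K) ((b : ℤ) - 1) := by
  rw [← ncard_projectivization_coordZeroSubspace ha,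
    ← ncard_projectivization_coordZeroSubspace hb,
    ← ncard_projectivization_coordZeroSubspace hc,
    ← coe_projectivization_coordZeroSubspace_inter]
  exact Set.ncard_union_add_ncard_inter _ _

end

lemma linearIndependent_X_mul_X {R σ : Type*} [CommSemiring R] (i : σ) :
    LinearIndependent R (fun j : σ => (X i * X j : MvPolynomial σ R)) := by
  have hinj : Function.Injective fun j : σ => Finsupp.single i 1 + Finsupp.single j 1 :=
    fun j k h => (Finsupp.single_left_inj one_ne_zero).mp (add_left_cancel h)
  convert (basisMonomials σ R).linearIndependent.comp _ hinj using 1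
  ext1 j
  simp [X, monomial_mul]

lemma iInter_projZeros_X_mul_X {F α : Type*} [Field F] [Fintype α] {n : ℕ} (a : Fin n)
    (f : α → Fin n) :
    ⋂ i, projZeros (X a * X (f i) : MvPolynomial (Fin n) F)
      = ((coordZeroSubspace F {a}).projectivization : Set (ℙ F (Fin n → F))) ∪
          (coordZeroSubspace F (univ.image f)).projectivization := by
  ext P
  simp [projZeros, Submodule.mem_projectivization_iff_rep_mem, mem_coordZeroSubspace,
    forall_or_left]

lemma dite_eq_X_zero_mul_X_add_one {R : Type*} [CommSemiring R] {m : ℕ} (j : Fin (m + 1)) :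
    (if h : (j : ℕ) + 1 < m + 1 then X 0 * X ⟨(j : ℕ) + 1, h⟩ else X 0 ^ 2 :
        MvPolynomial (Fin (m + 1)) R) = X 0 * X (j + 1) := by
  split_ifs with h
  · rw [Fin.mk_eq_mk.mpr (Fin.val_add_one_of_lt' h).symm]
  · obtain rfl : j = Fin.last m := Fin.ext (by rw [Fin.val_last]; omega)
    rw [Fin.last_add_one, pow_two]

lemma injective_castLE_add_one {r m : ℕ} (hrm : r ≤ m + 1) :
    Function.Injective fun i : Fin r => Fin.castLE hrm i + 1 :=
  fun _ _ h => Fin.castLE_injective hrm (add_right_cancel h)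

lemma card_insert_zero_image_castLE_add_one {r m : ℕ} (hrm : r ≤ m + 1) :
    #(insert 0 (univ.image fun i : Fin r => Fin.castLE hrm i + 1)) = min (r + 1) (m + 1) := by
  have hS := card_image_of_injective univ (injective_castLE_add_one hrm)
  rw [card_univ, Fintype.card_fin] at hS
  by_cases hrm' : r ≤ m
  · have h0 : (0 : Fin (m + 1)) ∉ univ.image fun i : Fin r => Fin.castLE hrm i + 1 := by
      simp only [mem_image, mem_univ, true_and, not_exists]
      intro i hi
      have := Fin.val_add_one_of_lt' (i := Fin.castLE hrm i) (by simp; omega)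
      simp [hi] at this
    rw [card_insert_of_notMem h0, hS]
    omega
  · have hle := card_le_card (subset_insert 0 (univ.image fun i : Fin r => Fin.castLE hrm i + 1))
    have hge := card_le_univ (insert 0 (univ.image fun i : Fin r => Fin.castLE hrm i + 1))
    rw [Fintype.card_fin] at hge
    omega

theorem stmt_10_general {F : Type*} [Field F] [Fintype F] (q : ℕ) (hq : q = Fintype.card F)
    (m : ℕ) (r : ℕ) (hrm : r ≤ m + 1)
    (Q : Fin (m + 1) → MvPolynomial (Fin (m + 1)) F)
    (hQ : ∀ j : Fin (m + 1), Q j =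
      if h : (j : ℕ) + 1 < m + 1
        then MvPolynomial.X 0 * MvPolynomial.X ⟨(j : ℕ) + 1, h⟩
        else MvPolynomial.X 0 ^ 2) :
    LinearIndependent F (fun i : Fin r => Q (Fin.castLE hrm i)) ∧
    (∀ i : Fin r, (Q (Fin.castLE hrm i)).IsHomogeneous 2) ∧
    (⋂ i : Fin r, projZeros (Q (Fin.castLE hrm i))).ncard
      = pj q ((m : ℤ) - 1) + (if r ≤ m then q ^ (m - r) else 0) := by
  simp only [hQ, dite_eq_X_zero_mul_X_add_one]
  refine ⟨(linearIndependent_X_mul_X 0).comp _ (injective_castLE_add_one hrm),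
    fun i => (isHomogeneous_X _ _).mul (isHomogeneous_X _ _), ?_⟩
  rw [iInter_projZeros_X_mul_X 0 fun i : Fin r => Fin.castLE hrm i + 1]
  have hS := card_image_of_injective univ (injective_castLE_add_one hrm)
  rw [card_univ, Fintype.card_fin] at hS
  have hcount := ncard_union_projectivization_coordZeroSubspace_add_ncard
    (K := F) (S := {0}) (T := univ.image fun i : Fin r => Fin.castLE hrm i + 1) (a := m)
    (b := m + 1 - r) (c := m - r) (by simp; omega) (by rw [hS, Fintype.card_fin]; omega)
    (by rw [← insert_eq, card_insert_zero_image_castLE_add_one, Fintype.card_fin]; omega)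
  subst hq
  split_ifs with hrm'
  · rw [show m + 1 - r = m - r + 1 by omega, pj_succ_natCast_sub_one] at hcount
    omega
  · rw [show m + 1 - r = m - r by omega] at hcount
    omega

/-- Consider the quadrics `Q_i = x_0 x_i` for `i = 1, ..., m` and `Q_{m+1} = x_0^2` in
`F_q[x_0, ..., x_m]` (below, `Q` is indexed by `Fin (m+1)`, with `Q ⟨j, _⟩ = Q_{j+1}`).
Then for `1 ≤ r ≤ m + 1` the polynomials `Q_1, ..., Q_r` are linearly independent
homogeneous polynomials of degree `2`, and `|V(Q_1, ..., Q_r)| = p_{m-1} + q^(m-r)` for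
`r ≤ m`, while `|V(Q_1, ..., Q_{m+1})| = p_{m-1}`. -/
theorem stmt_10 {F : Type*} [Field F] [Fintype F] (q : ℕ) (hq : q = Fintype.card F)
    (m : ℕ) (hm : 0 < m) (r : ℕ) (hr : 1 ≤ r) (hrm : r ≤ m + 1)
    (Q : Fin (m + 1) → MvPolynomial (Fin (m + 1)) F)
    (hQ : ∀ j : Fin (m + 1), Q j =
      if h : (j : ℕ) + 1 < m + 1
        then MvPolynomial.X 0 * MvPolynomial.X ⟨(j : ℕ) + 1, h⟩
        else MvPolynomial.X 0 ^ 2) :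
    LinearIndependent F (fun i : Fin r => Q (Fin.castLE hrm i)) ∧
    (∀ i : Fin r, (Q (Fin.castLE hrm i)).IsHomogeneous 2) ∧
    (⋂ i : Fin r, projZeros (Q (Fin.castLE hrm i))).ncard
      = pj q ((m : ℤ) - 1) + (if r ≤ m then q ^ (m - r) else 0) :=
  stmt_10_general q hq m r hrm Q hQ
end

section
/- Let m > 2, let k be an integer with 0 ≤ k < m - 1, let i be an integer with 1 ≤ i ≤ k, and set r := δ_m - δ_{k+1} + i. Define T_r := p_k + p_{k-i+1} - p_{2k-m-i+1} (the Tsfasman–Boguslavsky bound for r linearly independent quadrics in P^m) and Z_r := p_k + ⌊q^{k+1-i}⌋ (the Zanella bound). Then T_r - Z_r = p_{k-i} - p_{2k-m-i+1} ≥ q^{k-i} > 0; in particular Z_r < T_r. -/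
lemma pj_mono (q : ℕ) {a b : ℤ} (h : a ≤ b) : pj q a ≤ pj q b := by
  unfold pj
  split_ifs with ha hb
  · apply Finset.sum_le_sum_of_subset
    apply Finset.range_subset_range.2
    omega
  · omega
  · exact Nat.zero_le _
  · exact le_refl 0

lemma pj_succ (q n : ℕ) : pj q (n : ℤ) = pj q ((n : ℤ) - 1) + q ^ n := by
  cases n with
  | zero => simp [pj]
  | succ m =>
    have h1 : ((m : ℤ) + 1) - 1 = (m : ℤ) := by ring
    simp only [pj, Nat.cast_succ, h1]
    rw [if_pos (by positivity), if_pos (by positivity)]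
    have : ((m : ℤ) + 1).toNat = m + 1 := by omega
    rw [this, Int.toNat_natCast, Finset.sum_range_succ]

/-- Let `m > 2`, `0 ≤ k < m - 1`, `1 ≤ i ≤ k`, and `r = δ_m - δ_{k+1} + i` (where
`δ_j = binom(j+2,2)`).  With `T_r = p_k + p_{k-i+1} - p_{2k-m-i+1}` (the
Tsfasman–Boguslavsky bound) and `Z_r = p_k + ⌊q^(k+1-i)⌋ = p_k + q^(k+1-i)` (the Zanella
bound), one has `T_r - Z_r = p_{k-i} - p_{2k-m-i+1} ≥ q^(k-i) > 0`; in particular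
`Z_r < T_r`. -/
theorem stmt_11 (q : ℕ) (hq : IsPrimePow q) (m : ℕ) (hm : 2 < m)
    (k i : ℕ) (hk : k < m - 1) (hi : 1 ≤ i) (hik : i ≤ k)
    (r : ℕ) (hr : r = Nat.choose (m + 2) 2 - Nat.choose (k + 3) 2 + i)
    (T Z : ℤ)
    (hT : T = (pj q (k : ℤ) : ℤ) + pj q ((k : ℤ) - i + 1) - pj q (2 * (k : ℤ) - m - i + 1))
    (hZ : Z = (pj q (k : ℤ) : ℤ) + q ^ (k + 1 - i)) :
    T - Z = (pj q ((k : ℤ) - i) : ℤ) - pj q (2 * (k : ℤ) - m - i + 1) ∧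
    (q : ℤ) ^ (k - i) ≤ (pj q ((k : ℤ) - i) : ℤ) - pj q (2 * (k : ℤ) - m - i + 1) ∧
    0 < (pj q ((k : ℤ) - i) : ℤ) - pj q (2 * (k : ℤ) - m - i + 1) ∧
    Z < T := by
  have hq2 : 2 ≤ q := hq.two_le
  set n : ℕ := k - i with hn
  have hcast1 : (k : ℤ) - i = (n : ℤ) := by omega
  have hcast2 : (k : ℤ) - i + 1 = ((n + 1 : ℕ) : ℤ) := by push_cast; omega
  have hexp : k + 1 - i = n + 1 := by omega
  have hsucc : (pj q ((n + 1 : ℕ) : ℤ) : ℤ) = (pj q ((n : ℤ)) : ℤ) + (q : ℤ) ^ (n + 1) := by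
    have := pj_succ q (n + 1)
    have h1 : ((n + 1 : ℕ) : ℤ) - 1 = (n : ℤ) := by push_cast; ring
    rw [h1] at this
    exact_mod_cast this
  have hsucc2 : (pj q ((n : ℕ) : ℤ) : ℤ) = (pj q ((n : ℤ) - 1) : ℤ) + (q : ℤ) ^ n := by
    exact_mod_cast pj_succ q n
  have he : 2 * (k : ℤ) - m - i + 1 ≤ (n : ℤ) - 1 := by omega
  have hle : (pj q (2 * (k : ℤ) - m - i + 1) : ℤ) ≤ (pj q ((n : ℤ) - 1) : ℤ) := by
    exact_mod_cast pj_mono q he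
  have hTZ : T - Z = (pj q ((k : ℤ) - i) : ℤ) - pj q (2 * (k : ℤ) - m - i + 1) := by
    rw [hT, hZ, hcast2, hcast1, hexp, hsucc]
    ring
  have hqn : (0 : ℤ) < (q : ℤ) ^ n := by positivity
  have hge : (q : ℤ) ^ (k - i) ≤ (pj q ((k : ℤ) - i) : ℤ) - pj q (2 * (k : ℤ) - m - i + 1) := by
    rw [hcast1, hsucc2, ← hn]
    omega
  refine ⟨hTZ, hge, ?_, ?_⟩
  · calc (0 : ℤ) < (q : ℤ) ^ (k - i) := by positivity
      _ ≤ _ := hge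
  · have : 0 < T - Z := by
      rw [hTZ]
      calc (0 : ℤ) < (q : ℤ) ^ (k - i) := by positivity
        _ ≤ _ := hge
    omega
end

section
/- Let F_1, ..., F_5 be five linearly independent homogeneous polynomials of degree 2 in F_q[x_0, x_1, x_2, x_3]. Then |V(F_1, ..., F_5)| ≤ 1 + 2q, which is strictly smaller than the Tsfasman–Boguslavsky bound T_5 = 2(1+q) for five quadrics in P^3. -/
open Module Submodule MvPolynomial
open scoped LinearAlgebra.Projectivization

namespace MvPolynomial

variable {σ K : Type*} [Fintype σ] [Field K]

theorem finrank_homogeneousSubmodule (n : ℕ) :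
    finrank K (homogeneousSubmodule σ K n) = (Fintype.card σ).multichoose n := by
  classical
  have hs : {d : σ →₀ ℕ | d.degree = n} = ↑((Finset.univ : Finset σ).finsuppAntidiag n) := by
    ext d
    simp [Finsupp.degree_eq_sum]
  rw [homogeneousSubmodule_eq_finsupp_supported, hs,
    (AddMonoidAlgebra.supportedEquivFinsupp _).finrank_eq]
  simp [Finset.card_finsuppAntidiag_nat_eq_multichoose]

instance (n : ℕ) : Module.Finite K (homogeneousSubmodule σ K n) :=
  Module.Finite.iff_fg.mpr (homogeneousSubmodule_fg σ K n)

theorem exists_isHomogeneous_one_of_notMem {U : Submodule K (σ → K)} {x : σ → K} (hx : x ∉ U) :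
    ∃ ℓ : MvPolynomial σ K, ℓ.IsHomogeneous 1 ∧ (∀ y ∈ U, eval y ℓ = 0) ∧ eval x ℓ ≠ 0 := by
  classical
  obtain ⟨f, hfx, hfU⟩ := U.exists_dual_map_eq_bot_of_notMem hx inferInstance
  have heval : ∀ y, eval y (∑ i, C (f (Pi.single i 1)) * X i) = f y := fun y => by
    conv_rhs => rw [← Finset.univ_sum_single y]
    simp only [map_sum, map_mul, eval_C, eval_X]
    refine Finset.sum_congr rfl fun i _ => ?_
    rw [mul_comm, ← smul_eq_mul, ← map_smul, ← Pi.single_smul, smul_eq_mul, mul_one]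
  refine ⟨∑ i, C (f (Pi.single i 1)) * X i, ?_, fun y hy => ?_, by rwa [heval]⟩
  · exact IsHomogeneous.sum _ _ _ fun i _ => isHomogeneous_C_mul_X _ i
  · rw [heval, ← LinearMap.mem_ker]
    exact LinearMap.le_ker_iff_map.mpr hfU hy

end MvPolynomial

section Separation

variable {σ K : Type*} [Fintype σ] [Field K]

/-- Lists grow at the head: the quadric for `x` vanishes at the points listed after it. -/
def SeparatedByQuadrics : List (σ → K) → Prop
  | [] => True
  | x :: l => (∃ Q : MvPolynomial σ K, Q.IsHomogeneous 2 ∧ (∀ y ∈ l, eval y Q = 0) ∧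
      eval x Q ≠ 0) ∧ SeparatedByQuadrics l

theorem SeparatedByQuadrics.finrank_add_length_le {l : List (σ → K)}
    (hl : SeparatedByQuadrics l) (S : Submodule K (homogeneousSubmodule σ K 2))
    (hS : ∀ f ∈ S, ∀ y ∈ l, eval y (f : MvPolynomial σ K) = 0) :
    finrank K S + l.length ≤ (Fintype.card σ).multichoose 2 := by
  induction l generalizing S with
  | nil => simpa [finrank_homogeneousSubmodule] using Submodule.finrank_le S
  | cons x l ih =>
    obtain ⟨⟨Q, hQ, hQl, hQx⟩, hl⟩ := hl
    let Q' : homogeneousSubmodule σ K 2 := ⟨Q, hQ⟩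
    have hQS : Q' ∉ S := fun h => hQx (hS _ h x List.mem_cons_self)
    have hS' : ∀ f ∈ S ⊔ K ∙ Q', ∀ y ∈ l, eval y (f : MvPolynomial σ K) = 0 := by
      intro f hf y hy
      obtain ⟨s, hs, t, ht, rfl⟩ := mem_sup.mp hf
      obtain ⟨c, rfl⟩ := mem_span_singleton.mp ht
      simp [hS s hs y (List.mem_cons_of_mem x hy), hQl y hy, Q']
    have := ih hl _ hS'
    rw [finrank_sup_span_singleton hQS] at this
    simp only [List.length_cons]
    omega

theorem SeparatedByQuadrics.card_add_length_le {ι : Type*} [Fintype ι]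
    {f : ι → MvPolynomial σ K} (hf : LinearIndependent K f) (hhom : ∀ i, (f i).IsHomogeneous 2)
    {l : List (σ → K)} (hl : SeparatedByQuadrics l) (hvan : ∀ i, ∀ y ∈ l, eval y (f i) = 0) :
    Fintype.card ι + l.length ≤ (Fintype.card σ).multichoose 2 := by
  let g : ι → homogeneousSubmodule σ K 2 := fun i => ⟨f i, hhom i⟩
  have hg : LinearIndependent K g :=
    LinearIndependent.of_comp (homogeneousSubmodule σ K 2).subtype hf
  rw [← finrank_span_eq_card hg]
  refine hl.finrank_add_length_le _ fun p hp y hy => ?_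
  have hker : span K (Set.range g) ≤
      LinearMap.ker ((aeval y).toLinearMap ∘ₗ (homogeneousSubmodule σ K 2).subtype) :=
    span_le.mpr <| by
      rintro _ ⟨i, rfl⟩
      exact hvan i y hy
  exact hker hp

theorem SeparatedByQuadrics.cons_of_notMem {x : σ → K} {l : List (σ → K)}
    (hl : SeparatedByQuadrics l) {U W : Submodule K (σ → K)} (hU : x ∉ U) (hW : x ∉ W)
    (hlUW : ∀ y ∈ l, y ∈ U ∨ y ∈ W) : SeparatedByQuadrics (x :: l) := by
  obtain ⟨ℓ, hℓ, hℓU, hℓx⟩ := exists_isHomogeneous_one_of_notMem hU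
  obtain ⟨m, hm, hmW, hmx⟩ := exists_isHomogeneous_one_of_notMem hW
  refine ⟨⟨ℓ * m, hℓ.mul hm, fun y hy => ?_, by simp [hℓx, hmx]⟩, hl⟩
  rcases hlUW y hy with h | h <;> simp [hℓU y, hmW y, h]

end Separation

theorem finrank_span_pair_le {K V : Type*} [Field K] [AddCommGroup V] [Module K V] (x y : V) :
    finrank K (span K {x, y}) ≤ 2 := by
  classical
  refine (finrank_span_le_card ({x, y} : Set V)).trans ?_
  simpa using Finset.card_le_two

theorem finrank_span_triple_le {K V : Type*} [Field K] [AddCommGroup V] [Module K V]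
    (x y z : V) : finrank K (span K {x, y, z}) ≤ 3 := by
  classical
  refine (finrank_span_le_card ({x, y, z} : Set V)).trans ?_
  simpa using Finset.card_le_three

theorem notMem_sup_span_singleton_of_disjoint {K V : Type*} [Field K] [AddCommGroup V]
    [Module K V] {L M : Submodule K V} (hLM : Disjoint L M) {x y : V} (hx : x ∈ M) (hy : y ∈ M)
    (hxy : x ∉ K ∙ y) : x ∉ L ⊔ K ∙ y := by
  intro h
  obtain ⟨l, hl, z, hz, rfl⟩ := mem_sup.mp h
  have hzM : z ∈ M := (span_singleton_le_iff_mem y M).mpr hy hz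
  have hl0 : l = 0 := disjoint_def.mp hLM l hl (by simpa using M.sub_mem hx hzM)
  simp [hl0, hz] at hxy

namespace Projectivization

variable {K V : Type*} [Field K] [AddCommGroup V] [Module K V]

theorem rep_mem_span_singleton_iff {P Q : ℙ K V} : P.rep ∈ K ∙ Q.rep ↔ P = Q := by
  refine ⟨fun h => submodule_injective ?_, fun h => h ▸ mem_span_singleton_self _⟩
  rw [submodule_eq, submodule_eq]
  refine eq_of_le_of_finrank_eq ((span_singleton_le_iff_mem _ _).mpr h) ?_
  rw [finrank_span_singleton P.rep_nonzero, finrank_span_singleton Q.rep_nonzero]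

theorem rep_mk_mem_iff {v : V} (hv : v ≠ 0) {W : Submodule K V} :
    (mk K v hv).rep ∈ W ↔ v ∈ W := by
  obtain ⟨c, hc⟩ := (mk_eq_mk_iff K _ _ (rep_nonzero _) hv).mp (mk_rep (mk K v hv))
  rw [← hc, Submodule.smul_mem_iff']

theorem finrank_map_mkQ_span_singleton_le [FiniteDimensional K V] {W : Submodule K V} {v : V}
    (hv : v ≠ 0) (hvW : v ∈ W) : finrank K (W.map (K ∙ v).mkQ) + 1 ≤ finrank K W := by
  have h := LinearMap.finrank_range_add_finrank_ker ((K ∙ v).mkQ.domRestrict W)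
  rw [LinearMap.range_domRestrict] at h
  have hker : LinearMap.ker ((K ∙ v).mkQ.domRestrict W) ≠ ⊥ := by
    rw [Submodule.ne_bot_iff]
    exact ⟨⟨v, hvW⟩, by simp [mem_span_singleton_self], by simpa using hv⟩
  have := Submodule.finrank_eq_zero.not.mpr hker
  omega

def IsCap (S : Set (ℙ K V)) : Prop :=
  ∀ a ∈ S, ∀ b ∈ S, ∀ c ∈ S, a ≠ b → a ≠ c → b ≠ c → c.rep ∉ span K {a.rep, b.rep}

variable [Finite K] [Finite V]

theorem ncard_setOf_rep_mem_le (W : Submodule K V) (hW : finrank K W ≤ 2) :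
    {P : ℙ K V | P.rep ∈ W}.ncard ≤ Nat.card K + 1 := by
  have hsub : {P : ℙ K V | P.rep ∈ W} ⊆ Set.range (map W.subtype W.injective_subtype) := by
    intro P hP
    refine ⟨mk K ⟨P.rep, hP⟩ (by simpa using P.rep_nonzero), ?_⟩
    rw [map_mk]
    exact mk_rep P
  calc {P : ℙ K V | P.rep ∈ W}.ncard
      ≤ Nat.card (ℙ K W) := by
        rw [← Set.ncard_range_of_injective (map_injective W.subtype W.injective_subtype)]
        exact Set.ncard_le_ncard hsub
    _ = ∑ i ∈ Finset.range (finrank K W), Nat.card K ^ i := card_of_finrank K W rfl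
    _ ≤ ∑ i ∈ Finset.range 2, Nat.card K ^ i :=
        Finset.sum_le_sum_of_subset (Finset.range_subset_range.mpr hW)
    _ = Nat.card K + 1 := by simp [Finset.sum_range_succ, add_comm]

theorem ncard_union_setOf_rep_mem_le {L M : Submodule K V} (hL : finrank K L ≤ 2)
    (hM : finrank K M ≤ 2) (hLM : ¬Disjoint L M) :
    ({P : ℙ K V | P.rep ∈ L} ∪ {P | P.rep ∈ M}).ncard ≤ 2 * Nat.card K + 1 := by
  obtain ⟨x, hxL, hxM, hx⟩ : ∃ x ∈ L, x ∈ M ∧ x ≠ 0 := by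
    simpa [disjoint_def] using hLM
  have hinter : ({P : ℙ K V | P.rep ∈ L} ∩ {P | P.rep ∈ M}).Nonempty :=
    ⟨mk K x hx, (rep_mk_mem_iff hx).mpr hxL, (rep_mk_mem_iff hx).mpr hxM⟩
  have := Set.ncard_union_add_ncard_inter {P : ℙ K V | P.rep ∈ L} {P | P.rep ∈ M}
  have := (Set.ncard_pos).mpr hinter
  have := ncard_setOf_rep_mem_le L hL
  have := ncard_setOf_rep_mem_le M hM
  omega

theorem IsCap.ncard_le {S : Set (ℙ K V)} (hS : IsCap S) (W : Submodule K V)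
    (hW : finrank K W ≤ 3) (hSW : ∀ P ∈ S, P.rep ∈ W) : S.ncard ≤ Nat.card K + 2 := by
  rcases S.eq_empty_or_nonempty with rfl | ⟨p, hp⟩
  · simp
  set N := K ∙ p.rep
  have hne : ∀ Q ∈ S \ {p}, N.mkQ Q.rep ≠ 0 := fun Q hQ => by
    simpa [N, Quotient.mk_eq_zero, rep_mem_span_singleton_iff] using hQ.2
  let π : ↥(S \ {p}) → ↥{P : ℙ K (V ⧸ N) | P.rep ∈ W.map N.mkQ} := fun Q =>
    ⟨mk K _ (hne Q.1 Q.2), (rep_mk_mem_iff _).mpr (mem_map_of_mem (hSW _ Q.2.1))⟩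
  have hπ : Function.Injective π := by
    rintro ⟨Q, hQS, hQp⟩ ⟨Q', hQ'S, hQ'p⟩ h
    obtain ⟨c, hc⟩ := (mk_eq_mk_iff K _ _ _ _).mp (congrArg Subtype.val h)
    rw [Units.smul_def, ← map_smul] at hc
    obtain ⟨t, ht⟩ := mem_span_singleton.mp <| (Submodule.Quotient.eq N).mp hc.symm
    by_contra hQQ'
    refine hS p hp Q' hQ'S Q hQS (Ne.symm ?_) (Ne.symm ?_) (fun h => hQQ' (Subtype.ext h.symm)) ?_
    · simpa using hQ'p
    · simpa using hQp
    · exact mem_span_pair.mpr ⟨t, c, by rw [ht]; simp⟩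
  have : Finite (V ⧸ N) := Module.finite_of_finite K
  have hproj : (S \ {p}).ncard ≤ Nat.card K + 1 := by
    rw [← Nat.card_coe_set_eq]
    refine (Nat.card_le_card_of_injective π hπ).trans ?_
    rw [Nat.card_coe_set_eq]
    refine ncard_setOf_rep_mem_le _ ?_
    have : finrank K (W.map N.mkQ) + 1 ≤ finrank K W :=
      finrank_map_mkQ_span_singleton_le p.rep_nonzero (hSW p hp)
    omega
  have := Set.ncard_sdiff_singleton_add_one hp
  omega

end Projectivization

open Projectivization

section Configurations

variable {σ K : Type*} [Fintype σ] [Field K] {a b c d e f : ℙ K (σ → K)}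

theorem separatedByQuadrics_three (hab : a ≠ b) (hac : a ≠ c) (hbc : b ≠ c) :
    SeparatedByQuadrics [c.rep, b.rep, a.rep] := by
  have ha : a.rep ∉ (⊥ : Submodule K (σ → K)) := by simpa using a.rep_nonzero
  refine ((SeparatedByQuadrics.cons_of_notMem (l := []) trivial ha ha (by simp)).cons_of_notMem
    (rep_mem_span_singleton_iff.not.mpr hab.symm) (rep_mem_span_singleton_iff.not.mpr hab.symm)
    (by simp [mem_span_singleton_self])).cons_of_notMem
    (rep_mem_span_singleton_iff.not.mpr hac.symm) (rep_mem_span_singleton_iff.not.mpr hbc.symm)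
    (by simp [mem_span_singleton_self])

theorem separatedByQuadrics_of_collinear_of_notMem (hab : a ≠ b) (hac : a ≠ c) (hbc : b ≠ c)
    (hc : c.rep ∈ span K {a.rep, b.rep}) (hd : d.rep ∉ span K {a.rep, b.rep})
    (he : e.rep ∉ span K {a.rep, b.rep}) (hde : d ≠ e) :
    SeparatedByQuadrics [e.rep, d.rep, c.rep, b.rep, a.rep] :=
  ((separatedByQuadrics_three hab hac hbc).cons_of_notMem hd hd
    (by simp [mem_span_of_mem, hc])).cons_of_notMem he
    (rep_mem_span_singleton_iff.not.mpr hde.symm) (by simp [mem_span_of_mem, hc])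

theorem separatedByQuadrics_of_notMem_two_lines (hab : a ≠ b) (hac : a ≠ c) (hbc : b ≠ c)
    (hc : c.rep ∈ span K {a.rep, b.rep}) (hd : d.rep ∉ span K {a.rep, b.rep})
    (he : e.rep ∉ span K {a.rep, b.rep}) (hde : d ≠ e) (hfL : f.rep ∉ span K {a.rep, b.rep})
    (hfM : f.rep ∉ span K {d.rep, e.rep}) :
    SeparatedByQuadrics [f.rep, e.rep, d.rep, c.rep, b.rep, a.rep] :=
  (separatedByQuadrics_of_collinear_of_notMem hab hac hbc hc hd he hde).cons_of_notMem hfL hfM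
    (by simp [mem_span_of_mem, hc])

theorem separatedByQuadrics_of_skew_lines (hab : a ≠ b) (hac : a ≠ c) (hbc : b ≠ c)
    (hc : c.rep ∈ span K {a.rep, b.rep}) (hde : d ≠ e) (hdf : d ≠ f) (hef : e ≠ f)
    (hf : f.rep ∈ span K {d.rep, e.rep})
    (hLM : Disjoint (span K {a.rep, b.rep}) (span K {d.rep, e.rep})) :
    SeparatedByQuadrics [f.rep, e.rep, d.rep, c.rep, b.rep, a.rep] := by
  have hoff : ∀ P : ℙ K (σ → K), P.rep ∈ span K {d.rep, e.rep} → P.rep ∉ span K {a.rep, b.rep} :=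
    fun P hP hPL => P.rep_nonzero (disjoint_def.mp hLM _ hPL hP)
  have hdM : d.rep ∈ span K {d.rep, e.rep} := mem_span_of_mem (by simp)
  have heM : e.rep ∈ span K {d.rep, e.rep} := mem_span_of_mem (by simp)
  have hfd : f.rep ∉ span K {a.rep, b.rep} ⊔ K ∙ d.rep := notMem_sup_span_singleton_of_disjoint
    hLM hf hdM (rep_mem_span_singleton_iff.not.mpr hdf.symm)
  have hfe : f.rep ∉ span K {a.rep, b.rep} ⊔ K ∙ e.rep := notMem_sup_span_singleton_of_disjoint
    hLM hf heM (rep_mem_span_singleton_iff.not.mpr hef.symm)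
  exact (separatedByQuadrics_of_collinear_of_notMem hab hac hbc hc (hoff d hdM) (hoff e heM)
    hde).cons_of_notMem hfd hfe (by simp [mem_span_of_mem, mem_sup_left, mem_sup_right, hc])

theorem separatedByQuadrics_of_notMem_plane (hab : a ≠ b) (hac : a ≠ c) (hbc : b ≠ c)
    (hd : d.rep ∉ span K {a.rep, b.rep}) (hcd : c ≠ d)
    (he : e.rep ∉ span K {a.rep, b.rep}) (he' : e.rep ∉ span K {c.rep, d.rep})
    (hf : f.rep ∉ span K {a.rep, b.rep, c.rep}) (hf' : f.rep ∉ span K {d.rep, e.rep}) :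
    SeparatedByQuadrics [f.rep, e.rep, d.rep, c.rep, b.rep, a.rep] :=
  (((separatedByQuadrics_three hab hac hbc).cons_of_notMem hd
    (rep_mem_span_singleton_iff.not.mpr hcd.symm) (by simp [mem_span_of_mem])).cons_of_notMem
    he he' (by simp [mem_span_of_mem])).cons_of_notMem hf hf' (by simp [mem_span_of_mem])

variable [Finite K] {S : Set (ℙ K (σ → K))}

theorem exists_separatedByQuadrics_of_collinear (hS : 2 * Nat.card K + 2 ≤ S.ncard)
    (haS : a ∈ S) (hbS : b ∈ S) (hcS : c ∈ S) (hab : a ≠ b) (hac : a ≠ c) (hbc : b ≠ c)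
    (hc : c.rep ∈ span K {a.rep, b.rep}) :
    ∃ l : List (ℙ K (σ → K)), l.length = 6 ∧ (∀ P ∈ l, P ∈ S) ∧
      SeparatedByQuadrics (l.map Projectivization.rep) := by
  set L := span K {a.rep, b.rep}
  have hq : 1 < Nat.card K := Finite.one_lt_card
  have hoff : 2 < (S \ {P | P.rep ∈ L}).ncard := by
    have := Set.le_ncard_sdiff {P | P.rep ∈ L} S
    have := ncard_setOf_rep_mem_le L (finrank_span_pair_le _ _)
    omega
  obtain ⟨d, e, g, ⟨hdS, hdL⟩, ⟨heS, heL⟩, ⟨hgS, hgL⟩, hde, hdg, heg⟩ :=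
    (Set.two_lt_ncard_iff).mp hoff
  set M := span K {d.rep, e.rep}
  by_cases hf : ∃ f ∈ S, f.rep ∉ L ∧ f.rep ∉ M
  · obtain ⟨f, hfS, hfL, hfM⟩ := hf
    exact ⟨[f, e, d, c, b, a], rfl, by simp [haS, hbS, hcS, hdS, heS, hfS],
      separatedByQuadrics_of_notMem_two_lines hab hac hbc hc hdL heL hde hfL hfM⟩
  push Not at hf
  by_cases hLM : Disjoint L M
  · exact ⟨[g, e, d, c, b, a], rfl, by simp [haS, hbS, hcS, hdS, heS, hgS],
      separatedByQuadrics_of_skew_lines hab hac hbc hc hde hdg heg (hf g hgS hgL) hLM⟩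
  have hSLM : S ⊆ {P | P.rep ∈ L} ∪ {P | P.rep ∈ M} := fun P hP => (em _).imp id (hf P hP)
  have := (Set.ncard_le_ncard hSLM).trans
    (ncard_union_setOf_rep_mem_le (finrank_span_pair_le _ _) (finrank_span_pair_le _ _) hLM)
  omega

theorem Projectivization.IsCap.exists_separatedByQuadrics (hcap : IsCap S)
    (hS : 2 * Nat.card K + 2 ≤ S.ncard) :
    ∃ l : List (ℙ K (σ → K)), l.length = 6 ∧ (∀ P ∈ l, P ∈ S) ∧
      SeparatedByQuadrics (l.map Projectivization.rep) := by
  classical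
  have hq : 1 < Nat.card K := Finite.one_lt_card
  obtain ⟨a, b, c, haS, hbS, hcS, hab, hac, hbc⟩ := (Set.two_lt_ncard_iff (s := S)).mp (by omega)
  by_cases hf : ∃ f ∈ S, f.rep ∉ span K {a.rep, b.rep, c.rep}
  · obtain ⟨f, hfS, hf⟩ := hf
    have hrest : 1 < (S \ {a, b, c, f}).ncard := by
      have := Set.le_ncard_sdiff {a, b, c, f} S
      have : ({a, b, c, f} : Set (ℙ K (σ → K))).ncard ≤ 4 := by
        simpa using (Set.ncard_coe_finset ({a, b, c, f} : Finset _)).le.trans Finset.card_le_four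
      omega
    obtain ⟨d, ⟨hdS, hd⟩, e, ⟨heS, he⟩, hde⟩ := (Set.one_lt_ncard).mp hrest
    simp only [Set.mem_insert_iff, Set.mem_singleton_iff, not_or] at hd he
    obtain ⟨hda, hdb, hdc, hdf⟩ := hd
    obtain ⟨hea, heb, hec, hef⟩ := he
    exact ⟨[f, e, d, c, b, a], rfl, by simp [haS, hbS, hcS, hdS, heS, hfS],
      separatedByQuadrics_of_notMem_plane hab hac hbc
        (hcap a haS b hbS d hdS hab (Ne.symm hda) (Ne.symm hdb)) (Ne.symm hdc)
        (hcap a haS b hbS e heS hab (Ne.symm hea) (Ne.symm heb))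
        (hcap c hcS d hdS e heS (Ne.symm hdc) (Ne.symm hec) hde) hf
        (hcap d hdS e heS f hfS hde hdf hef)⟩
  push Not at hf
  have := hcap.ncard_le _ (finrank_span_triple_le _ _ _) hf
  omega

theorem exists_separatedByQuadrics_of_ncard (hS : 2 * Nat.card K + 2 ≤ S.ncard) :
    ∃ l : List (ℙ K (σ → K)), l.length = 6 ∧ (∀ P ∈ l, P ∈ S) ∧
      SeparatedByQuadrics (l.map Projectivization.rep) := by
  by_cases hcap : IsCap S
  · exact hcap.exists_separatedByQuadrics hS
  · simp only [IsCap, not_forall, not_not] at hcap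
    obtain ⟨a, haS, b, hbS, c, hcS, hab, hac, hbc, hc⟩ := hcap
    exact exists_separatedByQuadrics_of_collinear hS haS hbS hcS hab hac hbc hc

end Configurations

/-- If `F_1, ..., F_5` are five linearly independent homogeneous polynomials of degree `2`
in `F_q[x_0, x_1, x_2, x_3]`, then `|V(F_1, ..., F_5)| ≤ 1 + 2q`, which is strictly
smaller than the Tsfasman–Boguslavsky bound `T_5 = 2(1 + q)`. -/
theorem stmt_13 {F : Type*} [Field F] [Fintype F] (q : ℕ) (hq : q = Fintype.card F)
    (Fs : Fin 5 → MvPolynomial (Fin 4) F)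
    (hli : LinearIndependent F Fs) (hhom : ∀ i, (Fs i).IsHomogeneous 2) :
    (⋂ i, projZeros (Fs i)).ncard ≤ 1 + 2 * q ∧ 1 + 2 * q < 2 * (1 + q) := by
  refine ⟨?_, by omega⟩
  by_contra! hV
  obtain ⟨l, hlen, hlV, hsep⟩ := exists_separatedByQuadrics_of_ncard (S := ⋂ i, projZeros (Fs i))
    (by rw [Nat.card_eq_fintype_card, ← hq]; omega)
  have := hsep.card_add_length_le hli hhom fun i y hy => by
    obtain ⟨P, hP, rfl⟩ := List.mem_map.mp hy
    exact Set.mem_iInter.mp (hlV P hP) i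
  simp [hlen, Nat.multichoose_eq, Nat.choose] at this
end

section
/- Let m, r, d be integers with 2 ≤ r ≤ m, d ≥ 2, and d^r ≤ q + 1. Define T_r(d) := (d-1)·q^{m-1} + q^{m-r} + p_{m-2} (the Tsfasman–Boguslavsky bound) and C_r(d) := d^r·(p_{m-r} - p_{m-2r}) + p_{m-2r} (Couvreur's bound for an equidimensional variety in P^m of dimension m - r and degree d^r). Then C_r(d) ≤ (q^{m-r+2} + q^{m-r+1} - q^{m-2r+2} - 1)/(q - 1) and C_r(d) ≤ T_r(d). -/
variable {K : Type*} [Field K]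

theorem pj_of_neg (q : ℕ) {j : ℤ} (hj : j < 0) : pj q j = 0 :=
  if_neg (not_le.2 hj)

theorem pj_mono_s17 (q : ℕ) : Monotone (pj q) := by
  intro j k hjk
  by_cases hj : 0 ≤ j
  · rw [pj, pj, if_pos hj, if_pos (hj.trans hjk)]
    exact Finset.sum_le_sum_of_subset
      (Finset.range_subset_range.2 (Nat.succ_le_succ (Int.toNat_le_toNat hjk)))
  · rw [pj_of_neg q (not_le.1 hj)]
    exact Nat.zero_le _

theorem sub_one_mul_pj (q : ℕ) {j : ℤ} (hj : 0 ≤ j) :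
    ((q : K) - 1) * pj q j = (q : K) ^ (j + 1) - 1 := by
  lift j to ℕ using hj
  rw [pj, if_pos (Int.natCast_nonneg j), Int.toNat_natCast, ← Nat.cast_succ, zpow_natCast,
    Nat.cast_sum, mul_comm]
  push_cast
  exact geom_sum_mul _ _

variable [LinearOrder K] [IsStrictOrderedRing K]

theorem zpow_add_zpow_le_zpow_add_zpow {x : K} (hx : 1 ≤ x) {i j i' j' : ℤ}
    (hsum : i + j = i' + j') (hj : j' ≤ j) (hji : j ≤ i') :
    x ^ i + x ^ j ≤ x ^ i' + x ^ j' := by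
  have hx0 : x ≠ 0 := (zero_lt_one.trans_le hx).ne'
  have hfactor : x ^ i' + x ^ j' - (x ^ i + x ^ j) = (x ^ (i' - j) - 1) * (x ^ j - x ^ j') := by
    have hi : x ^ i = x ^ (i' - j) * x ^ j' := by rw [← zpow_add₀ hx0]; congr 1; omega
    have hi' : x ^ (i' - j) * x ^ j = x ^ i' := by rw [← zpow_add₀ hx0, sub_add_cancel]
    linear_combination -hi - hi'
  have hnonneg : 0 ≤ (x ^ (i' - j) - 1) * (x ^ j - x ^ j') :=
    mul_nonneg (sub_nonneg.2 (one_le_zpow₀ hx (by omega)))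
      (sub_nonneg.2 (zpow_le_zpow_right₀ hx hj))
  linarith

/-- The convention `p_j = 0` for `j < 0` keeps the identity `(q - 1) q p_j = q^{j+2} - q`
true as an inequality. -/
theorem zpow_sub_le_mul_pj {q : ℕ} (hq : 1 ≤ q) (j : ℤ) :
    (q : K) ^ (j + 2) - q ≤ ((q : K) - 1) * q * pj q j := by
  have hq' : (1 : K) ≤ q := by exact_mod_cast hq
  rcases lt_or_ge j 0 with hj | hj
  · rw [pj_of_neg q hj, Nat.cast_zero, mul_zero, sub_nonpos]
    calc (q : K) ^ (j + 2) ≤ (q : K) ^ (1 : ℤ) := zpow_le_zpow_right₀ hq' (by omega)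
      _ = q := zpow_one _
  · rw [mul_right_comm, sub_one_mul_pj q hj, sub_mul, one_mul,
      ← zpow_add_one₀ (zero_lt_one.trans_le hq').ne', add_assoc]
    norm_num

theorem couvreur_bound_le {q : ℕ} (hq : 1 < q) {D : K} (hD : D ≤ q + 1) {j k : ℤ}
    (hjk : j ≤ k) (hk : 0 ≤ k) :
    D * ((pj q k : K) - pj q j) + pj q j ≤
      ((q : K) ^ (k + 2) + (q : K) ^ (k + 1) - (q : K) ^ (j + 2) - 1) / ((q : K) - 1) := by
  have hq' : (1 : K) < q := by exact_mod_cast hq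
  have hq0 : (q : K) ≠ 0 := (zero_lt_one.trans hq').ne'
  have hpj : (pj q j : K) ≤ pj q k := by exact_mod_cast pj_mono_s17 q hjk
  have hpow : (q : K) ^ (k + 2) = (q : K) ^ (k + 1) * q := by
    rw [← zpow_add_one₀ hq0, add_assoc]
    norm_num
  rw [le_div_iff₀ (sub_pos.2 hq')]
  calc (D * ((pj q k : K) - pj q j) + pj q j) * ((q : K) - 1)
        ≤ (((q : K) + 1) * ((pj q k : K) - pj q j) + pj q j) * ((q : K) - 1) := by
          gcongr
    _ = ((q : K) + 1) * (((q : K) - 1) * pj q k) - ((q : K) - 1) * q * pj q j := by ring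
    _ ≤ ((q : K) + 1) * ((q : K) ^ (k + 1) - 1) - ((q : K) ^ (j + 2) - q) := by
          rw [sub_one_mul_pj q hk]
          gcongr
          exact zpow_sub_le_mul_pj hq.le j
    _ = (q : K) ^ (k + 2) + (q : K) ^ (k + 1) - (q : K) ^ (j + 2) - 1 := by
          rw [hpow]
          ring

theorem couvreur_estimate_le_pow_add_pj {q : ℕ} (hq : 1 < q) {m r : ℤ} (hr : 2 ≤ r)
    (hm : 2 ≤ m) :
    ((q : K) ^ (m - r + 2) + (q : K) ^ (m - r + 1) - (q : K) ^ (m - 2 * r + 2) - 1) / ((q : K) - 1)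
      ≤ (q : K) ^ (m - 1) + pj q (m - 2) + (q : K) ^ (m - r) := by
  have hq' : (1 : K) < q := by exact_mod_cast hq
  have hq0 : (q : K) ≠ 0 := (zero_lt_one.trans hq').ne'
  have hspread :
      (q : K) ^ (m - r + 2) + (q : K) ^ (m - r) ≤ (q : K) ^ m + (q : K) ^ (m - 2 * r + 2) :=
    zpow_add_zpow_le_zpow_add_zpow hq'.le (by ring) (by omega) (by omega)
  have hpj : ((q : K) - 1) * pj q (m - 2) = (q : K) ^ (m - 1) - 1 := by
    rw [sub_one_mul_pj q (by omega)]
    congr 2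
    ring
  have hm1 : (q : K) ^ m = (q : K) ^ (m - 1) * q := by
    rw [← zpow_add_one₀ hq0, sub_add_cancel]
  have hmr : (q : K) ^ (m - r + 1) = (q : K) ^ (m - r) * q := zpow_add_one₀ hq0 _
  rw [div_le_iff₀ (sub_pos.2 hq')]
  linear_combination hspread - hpj + hm1 + hmr

theorem stmt_17_general (q : ℕ) (m r d : ℕ)
    (hr : 2 ≤ r) (hrm : r ≤ m) (hd : 2 ≤ d) (hdr : d ^ r ≤ q + 1)
    (Cr : ℚ)
    (hCr : Cr = (d : ℚ) ^ r *
        ((pj q ((m : ℤ) - r) : ℚ) - (pj q ((m : ℤ) - 2 * r) : ℚ))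
      + (pj q ((m : ℤ) - 2 * r) : ℚ)) :
    Cr ≤ ((q : ℚ) ^ ((m : ℤ) - r + 2) + (q : ℚ) ^ ((m : ℤ) - r + 1)
        - (q : ℚ) ^ ((m : ℤ) - 2 * r + 2) - 1) / ((q : ℚ) - 1) ∧
    Cr ≤ ((d : ℚ) - 1) * (q : ℚ) ^ (m - 1) + (q : ℚ) ^ (m - r) + pj q ((m : ℤ) - 2) := by
  have hq1 : 1 < q := by
    have : 2 ^ 2 ≤ d ^ r := (Nat.pow_le_pow_right two_pos hr).trans (Nat.pow_le_pow_left hd r)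
    omega
  have hD : (d : ℚ) ^ r ≤ q + 1 := by exact_mod_cast hdr
  have hfirst := couvreur_bound_le hq1 hD (j := (m : ℤ) - 2 * r) (k := (m : ℤ) - r)
    (by omega) (by omega)
  rw [← hCr] at hfirst
  refine ⟨hfirst, hfirst.trans ((couvreur_estimate_le_pow_add_pj hq1 (m := m) (r := r)
    (by omega) (by omega)).trans ?_)⟩
  rw [← zpow_natCast, ← zpow_natCast, Nat.cast_sub (by omega), Nat.cast_sub hrm, Nat.cast_one]
  have hd1 : (1 : ℚ) ≤ (d : ℚ) - 1 := by
    have : (2 : ℚ) ≤ d := by exact_mod_cast hd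
    linarith
  have hpow_le := le_mul_of_one_le_left (zpow_nonneg (Nat.cast_nonneg q) ((m : ℤ) - 1)) hd1
  linarith

/-- For `2 ≤ r ≤ m`, `d ≥ 2` and `d^r ≤ q + 1`, Couvreur's bound
`C_r(d) = d^r⬝(p_{m-r} - p_{m-2r}) + p_{m-2r}` satisfies
`C_r(d) ≤ (q^(m-r+2) + q^(m-r+1) - q^(m-2r+2) - 1)/(q - 1)` and `C_r(d) ≤ T_r(d)`, where
`T_r(d) = (d-1)⬝q^(m-1) + q^(m-r) + p_{m-2}` is the Tsfasman–Boguslavsky bound.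
(Possibly negative exponents of `q` are interpreted via `zpow` in `ℚ`.) -/
theorem stmt_17 (q : ℕ) (hq : IsPrimePow q) (m r d : ℕ)
    (hr : 2 ≤ r) (hrm : r ≤ m) (hd : 2 ≤ d) (hdr : d ^ r ≤ q + 1)
    (Cr : ℚ)
    (hCr : Cr = (d : ℚ) ^ r *
        ((pj q ((m : ℤ) - r) : ℚ) - (pj q ((m : ℤ) - 2 * r) : ℚ))
      + (pj q ((m : ℤ) - 2 * r) : ℚ)) :
    Cr ≤ ((q : ℚ) ^ ((m : ℤ) - r + 2) + (q : ℚ) ^ ((m : ℤ) - r + 1)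
        - (q : ℚ) ^ ((m : ℤ) - 2 * r + 2) - 1) / ((q : ℚ) - 1) ∧
    Cr ≤ ((d : ℚ) - 1) * (q : ℚ) ^ (m - 1) + (q : ℚ) ^ (m - r) + pj q ((m : ℤ) - 2) :=
  stmt_17_general q m r d hr hrm hd hdr Cr hCr
end
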